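/- Let Γ be a group generated by a finite set S = S⁻¹ and let q : Γ → ℝ be a homogeneous quasi-homomorphism. Then there exists a constant C > 0 such that |q(g)| ≤ C·τ_{S̄}(g) for every g ∈ Γ, where τ_{S̄}(g) = lim_{n→∞} |gⁿ|_{S̄}/n. Consequently, if q(g) ≠ 0 then g is undistorted with respect to the bi-invariant word metric, i.e., τ_{S̄}(g) > 0. -/

import Mathlib

/-- The set of all conjugates of elements of `S`. -/
def conjSet {G : Type*} [Group G] (S : Set G) : Set G :=
  {x | ∃ g : G, ∃ s ∈ S, x = g * s * g⁻¹}

/-- The word norm of `g` with respect to a generating set `T`: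
the least length of a word in elements of `T` expressing `g`. -/
noncomputable def wordNorm {G : Type*} [Group G] (T : Set G) (g : G) : ℕ :=
  sInf {k | ∃ l : List G, (∀ x ∈ l, x ∈ T) ∧ l.prod = g ∧ l.length = k}

/-!
A homogeneous quasimorphism is conjugation invariant: `|q (g x g⁻¹) - q x| ≤ 2D`, and applying this
to `xⁿ` multiplies the left side by `n`. So `|q|` is bounded by some `M` on all conjugates of the
finite set `S`, and the quasimorphism inequality gives `|q x| ≤ (M + D) |x|` for the bi-invariant
word norm. For `x = gⁿ`, homogeneity turns this into `|q g| ≤ (M + D) |gⁿ| / n → (M + D) τ(g)`.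
-/

lemma eq_zero_of_forall_abs_natCast_mul_le {a C : ℝ} (h : ∀ n : ℕ, |n * a| ≤ C) : a = 0 := by
  by_contra ha
  have ha' : 0 < |a| := abs_pos.mpr ha
  obtain ⟨n, hn⟩ := exists_nat_gt (C / |a|)
  have := h n
  rw [abs_mul, Nat.abs_cast] at this
  rw [div_lt_iff₀ ha'] at hn
  linarith

def IsQuasiHom {Γ : Type*} [Group Γ] (q : Γ → ℝ) (D : ℝ) : Prop :=
  ∀ g h : Γ, |q g - q (g * h) + q h| ≤ D

def IsHomogeneous {Γ : Type*} [Group Γ] (q : Γ → ℝ) : Prop :=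
  ∀ g : Γ, ∀ n : ℤ, q (g ^ n) = n * q g

section Quasimorphism

variable {Γ : Type*} [Group Γ] {q : Γ → ℝ} {D : ℝ}

lemma IsQuasiHom.nonneg (hq : IsQuasiHom q D) : 0 ≤ D :=
  (abs_nonneg _).trans (hq 1 1)

lemma IsQuasiHom.abs_map_mul_le (hq : IsQuasiHom q D) (g h : Γ) :
    |q (g * h)| ≤ |q g| + |q h| + D := by
  have := hq g h
  rw [abs_le] at this
  rw [abs_le]
  constructor <;> linarith [neg_abs_le (q g), neg_abs_le (q h), le_abs_self (q g),
    le_abs_self (q h)]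

lemma IsQuasiHom.abs_map_list_prod_le (hq : IsQuasiHom q D) (h₁ : q 1 = 0) {M : ℝ}
    {l : List Γ} (hl : ∀ x ∈ l, |q x| ≤ M) : |q l.prod| ≤ l.length * (M + D) := by
  induction l with
  | nil => simp [h₁]
  | cons a t ih =>
    rw [List.forall_mem_cons] at hl
    calc |q (a * t.prod)| ≤ |q a| + |q t.prod| + D := hq.abs_map_mul_le a t.prod
      _ ≤ M + t.length * (M + D) + D := by gcongr; exacts [hl.1, ih hl.2]
      _ = (a :: t).length * (M + D) := by push_cast [List.length_cons]; ring

lemma IsHomogeneous.map_one (hhom : IsHomogeneous q) : q 1 = 0 := by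
  simpa using hhom 1 0

lemma IsHomogeneous.map_pow (hhom : IsHomogeneous q) (g : Γ) (n : ℕ) : q (g ^ n) = n * q g := by
  simpa using hhom g n

lemma IsHomogeneous.map_inv (hhom : IsHomogeneous q) (g : Γ) : q g⁻¹ = -q g := by
  simpa using hhom g (-1)

lemma IsQuasiHom.abs_map_conj_sub_le (hq : IsQuasiHom q D) (hhom : IsHomogeneous q)
    (g x : Γ) : |q (g * x * g⁻¹) - q x| ≤ 2 * D := by
  have h₁ := hq g x
  have h₂ := hq (g * x) g⁻¹
  rw [hhom.map_inv] at h₂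
  rw [abs_le] at h₁ h₂ ⊢
  constructor <;> linarith

lemma IsQuasiHom.map_conj (hq : IsQuasiHom q D) (hhom : IsHomogeneous q) (g x : Γ) :
    q (g * x * g⁻¹) = q x := by
  refine sub_eq_zero.mp (eq_zero_of_forall_abs_natCast_mul_le (C := 2 * D) fun n => ?_)
  have := hq.abs_map_conj_sub_le hhom g (x ^ n)
  rwa [← conj_pow, hhom.map_pow, hhom.map_pow, ← mul_sub] at this

end Quasimorphism

section WordNorm

variable {G : Type*} [Group G]

lemma exists_list_prod_eq_length_eq_wordNorm {T : Set G} (hT : Submonoid.closure T = ⊤)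
    (g : G) : ∃ l : List G, (∀ x ∈ l, x ∈ T) ∧ l.prod = g ∧ l.length = wordNorm T g := by
  have hne : {k | ∃ l : List G, (∀ x ∈ l, x ∈ T) ∧ l.prod = g ∧ l.length = k}.Nonempty := by
    obtain ⟨l, hl, hprod⟩ := Submonoid.exists_list_of_mem_closure (hT ▸ Submonoid.mem_top g)
    exact ⟨l.length, l, hl, hprod, rfl⟩
  exact Nat.sInf_mem hne

lemma subset_conjSet (S : Set G) : S ⊆ conjSet S :=
  fun s hs => ⟨1, s, hs, by group⟩

lemma Submonoid.closure_conjSet_eq_top {S : Set G} (hinv : S⁻¹ = S)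
    (hgen : Subgroup.closure S = ⊤) : Submonoid.closure (conjSet S) = ⊤ := by
  have hS : Submonoid.closure S = ⊤ := by
    rw [← Subgroup.top_toSubmonoid, ← hgen, Subgroup.closure_toSubmonoid, hinv, Set.union_self]
  exact top_le_iff.mp (hS ▸ Submonoid.closure_mono (subset_conjSet S))

end WordNorm

lemma IsQuasiHom.exists_abs_le_mul_wordNorm {Γ : Type*} [Group Γ] {S : Set Γ} {q : Γ → ℝ}
    {D : ℝ} (hq : IsQuasiHom q D) (hhom : IsHomogeneous q) (hfin : S.Finite)
    (hinv : S⁻¹ = S) (hgen : Subgroup.closure S = ⊤) :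
    ∃ C : ℝ, 0 < C ∧ ∀ x : Γ, |q x| ≤ C * wordNorm (conjSet S) x := by
  obtain ⟨M, hM⟩ : BddAbove ((fun s => |q s|) '' S) := (hfin.image _).bddAbove
  have hM_conj : ∀ x ∈ conjSet S, |q x| ≤ max M 1 := by
    rintro x ⟨g, s, hs, rfl⟩
    rw [hq.map_conj hhom]
    exact le_max_of_le_left (hM ⟨s, hs, rfl⟩)
  refine ⟨max M 1 + D, by linarith [le_max_right M 1, hq.nonneg], fun x => ?_⟩
  obtain ⟨l, hl, rfl, hlen⟩ :=
    exists_list_prod_eq_length_eq_wordNorm (Submonoid.closure_conjSet_eq_top hinv hgen) x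
  rw [mul_comm, ← hlen]
  exact hq.abs_map_list_prod_le hhom.map_one fun y hy => hM_conj y (hl y hy)

lemma IsHomogeneous.abs_le_mul_of_tendsto {Γ : Type*} [Group Γ] {q : Γ → ℝ}
    (hhom : IsHomogeneous q) {f : Γ → ℝ} {C : ℝ} (hf : ∀ x, |q x| ≤ C * f x) {g : Γ} {τ : ℝ}
    (hτ : Filter.Tendsto (fun n : ℕ => f (g ^ n) / n) Filter.atTop (nhds τ)) :
    |q g| ≤ C * τ := by
  refine ge_of_tendsto (hτ.const_mul C) (Filter.eventually_atTop.mpr ⟨1, fun n hn => ?_⟩)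
  have hn' : (0 : ℝ) < n := by exact_mod_cast hn
  rw [← mul_div_assoc, le_div_iff₀ hn']
  calc |q g| * n = |q (g ^ n)| := by rw [hhom.map_pow, abs_mul, Nat.abs_cast, mul_comm]
    _ ≤ C * f (g ^ n) := hf (g ^ n)

theorem homogeneous_quasimorphism_le_translation_length_general {Γ : Type*} [Group Γ]
    (S : Set Γ) (hfin : S.Finite) (hinv : S⁻¹ = S)
    (hgen : Subgroup.closure S = ⊤)
    (q : Γ → ℝ) (D : ℝ)
    (hq : ∀ g h : Γ, |q g - q (g * h) + q h| ≤ D)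
    (hhom : ∀ g : Γ, ∀ n : ℤ, q (g ^ n) = n * q g) :
    ∃ C : ℝ, 0 < C ∧ ∀ g : Γ, ∀ τg : ℝ,
      Filter.Tendsto (fun n : ℕ => (wordNorm (conjSet S) (g ^ n) : ℝ) / n)
        Filter.atTop (nhds τg) →
      (|q g| ≤ C * τg ∧ (q g ≠ 0 → 0 < τg)) := by
  obtain ⟨C, hC, hbound⟩ := IsQuasiHom.exists_abs_le_mul_wordNorm hq hhom hfin hinv hgen
  refine ⟨C, hC, fun g τg hτ => ?_⟩
  have hle : |q g| ≤ C * τg := IsHomogeneous.abs_le_mul_of_tendsto hhom hbound hτ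
  refine ⟨hle, fun hg => ?_⟩
  exact pos_of_mul_pos_right ((abs_pos.mpr hg).trans_le hle) hC.le

/-- A homogeneous quasi-homomorphism on a group generated by a finite symmetric
set S is bounded by a multiple of the translation length of the bi-invariant
word norm; consequently, every g with q(g) ≠ 0 is undistorted. -/
theorem homogeneous_quasimorphism_le_translation_length {Γ : Type*} [Group Γ]
    (S : Set Γ) (hfin : S.Finite) (hinv : S⁻¹ = S)
    (hgen : Subgroup.closure S = ⊤)
    (q : Γ → ℝ) (D : ℝ) (hD : 0 ≤ D)
    (hq : ∀ g h : Γ, |q g - q (g * h) + q h| ≤ D)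
    (hhom : ∀ g : Γ, ∀ n : ℤ, q (g ^ n) = n * q g) :
    ∃ C : ℝ, 0 < C ∧ ∀ g : Γ, ∀ τg : ℝ,
      Filter.Tendsto (fun n : ℕ => (wordNorm (conjSet S) (g ^ n) : ℝ) / n)
        Filter.atTop (nhds τg) →
      (|q g| ≤ C * τg ∧ (q g ≠ 0 → 0 < τg)) :=
  homogeneous_quasimorphism_le_translation_length_general S hfin hinv hgen q D hq hhom
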